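/- arXiv:1309.7456 — 2 statements merged into one kernel-verified Lean document; each statement's English description precedes it below -/
import Mathlib

section
/- Let f be a nonnegative function in Σ(ℝᴺ) that is not a.e. equal to a radially symmetric decreasing function (i.e. f ≠ f* a.e.). Then ∫ |x|² (f*(x))² dx < ∞ and ∫ |x|² (f*(x))² dx ≤ ∫ |x|² f(x)² dx, with strict inequality when f ≠ f*. -/
open MeasureTheory Set
open scoped ENNReal NNReal

noncomputable section

namespace RearrangementAux

/-- A set downward closed with respect to the norm is (open or closed) ball or univ. -/
lemma ball_shape {E : Type*} [NormedAddCommGroup E] (B : Set E)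
    (hdc : ∀ x y : E, ‖x‖ ≤ ‖y‖ → y ∈ B → x ∈ B) :
    (∃ r : ℝ, 0 ≤ r ∧ (B = Metric.ball 0 r ∨ B = Metric.closedBall 0 r)) ∨ B = univ := by
  by_cases hub : ∃ R : ℝ, ∀ y ∈ B, ‖y‖ ≤ R
  · left
    obtain ⟨R, hR⟩ := hub
    set S : Set ℝ := (fun y => ‖y‖) '' B ∪ {0} with hS
    have hSne : S.Nonempty := ⟨0, Or.inr rfl⟩
    have hSbdd : BddAbove S := by
      refine ⟨max R 0, ?_⟩
      rintro s (⟨y, hy, rfl⟩ | rfl)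
      · exact le_max_of_le_left (hR y hy)
      · exact le_max_right _ _
    set r := sSup S with hr
    have hr0 : 0 ≤ r := le_csSup hSbdd (Or.inr rfl)
    have hball : Metric.ball (0 : E) r ⊆ B := by
      intro x hx
      rw [Metric.mem_ball, dist_zero_right] at hx
      obtain ⟨s, hs, hxs⟩ := exists_lt_of_lt_csSup hSne hx
      rcases hs with ⟨y, hy, rfl⟩ | rfl
      · exact hdc x y hxs.le hy
      · exact absurd hxs (not_lt.2 (norm_nonneg x))
    have hcb : B ⊆ Metric.closedBall (0 : E) r := by
      intro y hy
      rw [Metric.mem_closedBall, dist_zero_right]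
      exact le_csSup hSbdd (Or.inl ⟨y, hy, rfl⟩)
    refine ⟨r, hr0, ?_⟩
    by_cases hsph : ∃ y ∈ B, ‖y‖ = r
    · right
      obtain ⟨y, hyB, hyr⟩ := hsph
      refine subset_antisymm hcb fun x hx => ?_
      rw [Metric.mem_closedBall, dist_zero_right] at hx
      exact hdc x y (hx.trans_eq hyr.symm) hyB
    · left
      refine subset_antisymm (fun y hy => ?_) hball
      rw [Metric.mem_ball, dist_zero_right]
      have hle : ‖y‖ ≤ r := by
        have := Metric.mem_closedBall.1 (hcb hy); rwa [dist_zero_right] at this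
      rcases lt_or_eq_of_le hle with h | h
      · exact h
      · exact absurd ⟨y, hy, h⟩ hsph
  · right
    push_neg at hub
    refine eq_univ_of_forall fun x => ?_
    obtain ⟨y, hyB, hxy⟩ := hub ‖x‖
    exact hdc x y hxy.le hyB

variable {E : Type*} [NormedAddCommGroup E] [MeasurableSpace E] [BorelSpace E]

lemma bathtub (ν : Measure E)
    (hsph : ∀ r : ℝ, ν (Metric.sphere (0:E) r) = 0)
    (w : E → ℝ≥0∞) (hw : w = fun x => ENNReal.ofReal (‖x‖ ^ 2))
    (A B : Set E) (hA : MeasurableSet A) (hB : MeasurableSet B)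
    (hAB : ν A = ν B) (hBfin : ν B ≠ ⊤)
    (r : ℝ) (hr : 0 ≤ r)
    (hB1 : ∀ x ∈ B, ‖x‖ ≤ r) (hB2 : ∀ x : E, ‖x‖ < r → x ∈ B) :
    (ν.withDensity w) B ≤ (ν.withDensity w) A ∧
      ((ν.withDensity w) A ≠ ⊤ → (ν.withDensity w) A ≤ (ν.withDensity w) B →
        ν (A \ B) = 0 ∧ ν (B \ A) = 0) := by
  set μ' := ν.withDensity w with hμ'
  have hwm : Measurable w := by
    rw [hw]; exact ((measurable_norm.pow measurable_const)).ennreal_ofReal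
  have happ : ∀ s : Set E, MeasurableSet s → μ' s = ∫⁻ x in s, w x ∂ν := fun s hs =>
    withDensity_apply w hs
  -- measure cancellation : ν (A \ B) = ν (B \ A)
  have hc1 : ν (A ∩ B) + ν (A \ B) = ν A := measure_inter_add_diff A hB
  have hc2 : ν (B ∩ A) + ν (B \ A) = ν B := measure_inter_add_diff B hA
  have hcfin : ν (A ∩ B) ≠ ⊤ := fun h => hBfin (top_le_iff.1 (h ▸ measure_mono inter_subset_right))
  have hm12 : ν (A \ B) = ν (B \ A) := by
    have : ν (A ∩ B) + ν (A \ B) = ν (A ∩ B) + ν (B \ A) := by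
      rw [hc1, hAB, ← hc2, inter_comm]
    exact (ENNReal.add_right_inj hcfin).1 this
  -- weight bounds on the two crescents
  have hAmB : ∀ x ∈ A \ B, ENNReal.ofReal (r ^ 2) ≤ w x := by
    rintro x ⟨-, hxB⟩
    have : r ≤ ‖x‖ := not_lt.1 fun h => hxB (hB2 x h)
    rw [hw]
    exact ENNReal.ofReal_le_ofReal (by nlinarith [norm_nonneg x])
  have hBmA : ∀ x ∈ B \ A, w x ≤ ENNReal.ofReal (r ^ 2) := by
    rintro x ⟨hxB, -⟩
    have : ‖x‖ ≤ r := hB1 x hxB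
    rw [hw]
    exact ENNReal.ofReal_le_ofReal (by nlinarith [norm_nonneg x])
  have hub : μ' (B \ A) ≤ ENNReal.ofReal (r ^ 2) * ν (B \ A) := by
    rw [happ _ (hB.diff hA)]
    calc ∫⁻ x in B \ A, w x ∂ν ≤ ∫⁻ _ in B \ A, ENNReal.ofReal (r ^ 2) ∂ν :=
          setLIntegral_mono measurable_const fun x hx => hBmA x hx
      _ = ENNReal.ofReal (r ^ 2) * ν (B \ A) := setLIntegral_const _ _
  have hlb : ENNReal.ofReal (r ^ 2) * ν (A \ B) ≤ μ' (A \ B) := by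
    rw [happ _ (hA.diff hB)]
    calc ENNReal.ofReal (r ^ 2) * ν (A \ B) = ∫⁻ _ in A \ B, ENNReal.ofReal (r ^ 2) ∂ν :=
          (setLIntegral_const _ _).symm
      _ ≤ ∫⁻ x in A \ B, w x ∂ν := setLIntegral_mono hwm fun x hx => hAmB x hx
  have hd1 : μ' (A ∩ B) + μ' (A \ B) = μ' A := measure_inter_add_diff A hB
  have hd2 : μ' (B ∩ A) + μ' (B \ A) = μ' B := measure_inter_add_diff B hA
  have hBA_le_AB : μ' (B \ A) ≤ μ' (A \ B) :=
    hub.trans (le_trans (le_of_eq (by rw [hm12])) hlb)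
  constructor
  · rw [← hd1, ← hd2, inter_comm B A]
    exact add_le_add le_rfl hBA_le_AB
  · intro hAfin hle
    have heq : μ' A = μ' B := le_antisymm hle (by rw [← hd1, ← hd2, inter_comm B A]; exact add_le_add le_rfl hBA_le_AB)
    have hdfin : μ' (A ∩ B) ≠ ⊤ := fun h => hAfin (top_le_iff.1 (h ▸ measure_mono inter_subset_left))
    have hAB_eq : μ' (A \ B) = μ' (B \ A) := by
      have : μ' (A ∩ B) + μ' (A \ B) = μ' (A ∩ B) + μ' (B \ A) := by
        rw [hd1, heq, ← hd2, inter_comm]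
      exact (ENNReal.add_right_inj hdfin).1 this
    -- so μ' (A \ B) = ofReal r^2 * ν (A \ B), forcing A \ B a.e. in the sphere
    have hkey : μ' (A \ B) = ENNReal.ofReal (r ^ 2) * ν (A \ B) := by
      refine le_antisymm ?_ hlb
      rw [hAB_eq, hm12]
      exact hub
    have hABfin : μ' (A \ B) ≠ ⊤ := fun h => hAfin (top_le_iff.1 (h ▸ measure_mono diff_subset))
    have hconstfin : ∫⁻ _ in A \ B, ENNReal.ofReal (r ^ 2) ∂ν ≠ ⊤ := by
      rw [setLIntegral_const, ← hkey]; exact hABfin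
    have haeq : (fun _ : E => ENNReal.ofReal (r ^ 2)) =ᵐ[ν.restrict (A \ B)] w := by
      refine ae_eq_of_ae_le_of_lintegral_le ?_ hconstfin hwm.aemeasurable ?_
      · filter_upwards [ae_restrict_mem (hA.diff hB)] with x hx using hAmB x hx
      · rw [setLIntegral_const, ← hkey, happ _ (hA.diff hB)]
    have hsub : ν ((A \ B) \ Metric.sphere (0:E) r) = 0 := by
      have : ∀ᵐ x ∂ν.restrict (A \ B), x ∈ Metric.sphere (0:E) r := by
        filter_upwards [haeq, ae_restrict_mem (hA.diff hB)] with x hx hxm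
        have hge : r ≤ ‖x‖ := not_lt.1 fun h => hxm.2 (hB2 x h)
        have : r ^ 2 = ‖x‖ ^ 2 := by
          have h2 := hx
          rw [hw] at h2
          have := (ENNReal.ofReal_eq_ofReal_iff (by positivity) (by positivity)).1 h2
          linarith [this]
        have : ‖x‖ = r := by nlinarith
        simpa [Metric.mem_sphere, dist_zero_right] using this
      have h' := (ae_restrict_iff' (μ := ν) (p := fun x => x ∈ Metric.sphere (0:E) r)
        (hA.diff hB)).1 this
      rw [ae_iff] at h'
      refine measure_mono_null (fun x hx => ?_) h'
      simp only [mem_setOf_eq, Classical.not_imp]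
      exact ⟨hx.1, hx.2⟩
    have hm1 : ν (A \ B) = 0 := by
      have : ν (A \ B) ≤ ν ((A \ B) \ Metric.sphere (0:E) r) + ν (Metric.sphere (0:E) r) := by
        refine (measure_mono (fun x hx => ?_)).trans (measure_union_le _ _)
        by_cases hxs : x ∈ Metric.sphere (0:E) r
        · exact Or.inr hxs
        · exact Or.inl ⟨hx, hxs⟩
      simpa [hsub, hsph r] using this
    exact ⟨hm1, by rw [← hm12]; exact hm1⟩

/-- volume of the "xor" slice equals |a - b| -/
lemma slice_vol (a b : ℝ) (ha : 0 ≤ a) (hb : 0 ≤ b) :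
    volume ({s : ℝ | (s < a ∧ ¬ s < b) ∨ (s < b ∧ ¬ s < a)} ∩ Ioi 0)
      = ENNReal.ofReal (|a - b|) := by
  set l := min a b
  set u := max a b
  have hl : 0 ≤ l := le_min ha hb
  have hS : {s : ℝ | (s < a ∧ ¬ s < b) ∨ (s < b ∧ ¬ s < a)} = Ico l u := by
    ext s
    rcases le_total a b with hab | hab
    · simp only [mem_setOf_eq, mem_Ico, not_lt, min_eq_left hab, max_eq_right hab, l, u]
      constructor
      · rintro (⟨h1, h2⟩ | ⟨h1, h2⟩) <;> constructor <;> linarith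
      · rintro ⟨h1, h2⟩; exact Or.inr ⟨h2, h1⟩
    · simp only [mem_setOf_eq, mem_Ico, not_lt, min_eq_right hab, max_eq_left hab, l, u]
      constructor
      · rintro (⟨h1, h2⟩ | ⟨h1, h2⟩) <;> constructor <;> linarith
      · rintro ⟨h1, h2⟩; exact Or.inl ⟨h2, h1⟩
  rw [hS]
  have h1 : Ioo l u ⊆ Ico l u ∩ Ioi 0 := fun s hs => ⟨⟨hs.1.le, hs.2⟩, lt_of_le_of_lt hl hs.1⟩
  have h2 : Ico l u ∩ Ioi 0 ⊆ Ico l u := inter_subset_left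
  have key : volume (Ico l u ∩ Ioi 0) = ENNReal.ofReal (u - l) := by
    refine le_antisymm ?_ ?_
    · rw [← Real.volume_Ico]; exact measure_mono h2
    · rw [← Real.volume_Ioo]; exact measure_mono h1
  rw [key, show u - l = |a - b| from (max_sub_min_eq_abs a b).trans (abs_sub_comm b a)]

lemma ae_eq_of_superlevel (ν : Measure E) [SigmaFinite ν]
    (f g : E → ℝ) (hf0 : ∀ x, 0 ≤ f x) (hg0 : ∀ x, 0 ≤ g x)
    (hfm : Measurable f) (hgm : Measurable g)
    (h : ∀ᵐ s ∂(volume.restrict (Ioi (0:ℝ))),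
      ν ({x | s < f x} \ {x | s < g x}) = 0 ∧ ν ({x | s < g x} \ {x | s < f x}) = 0) :
    f =ᵐ[ν] g := by
  set μ₁ := volume.restrict (Ioi (0:ℝ))
  set T : Set (ℝ × E) := {p | (p.1 < f p.2 ∧ ¬ p.1 < g p.2) ∨ (p.1 < g p.2 ∧ ¬ p.1 < f p.2)}
  have hT : MeasurableSet T := by
    have h1 : MeasurableSet {p : ℝ × E | p.1 < f p.2} :=
      measurableSet_lt measurable_fst (hfm.comp measurable_snd)
    have h2 : MeasurableSet {p : ℝ × E | p.1 < g p.2} :=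
      measurableSet_lt measurable_fst (hgm.comp measurable_snd)
    exact (h1.diff h2).union (h2.diff h1)
  have hzero : (μ₁.prod ν) T = 0 := by
    rw [Measure.prod_apply hT]
    refine (lintegral_eq_zero_iff' (measurable_measure_prodMk_left hT).aemeasurable).2 ?_
    filter_upwards [h] with s hs
    have hpre : Prod.mk s ⁻¹' T
        = ({x | s < f x} \ {x | s < g x}) ∪ ({x | s < g x} \ {x | s < f x}) := by
      ext x; simp only [T, mem_preimage, mem_setOf_eq, mem_union, mem_diff]
      try tauto
    show ν (Prod.mk s ⁻¹' T) = 0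
    rw [hpre]
    exact le_antisymm ((measure_union_le _ _).trans (by rw [hs.1, hs.2]; simp)) zero_le
  have hswap : (μ₁.prod ν) T = ∫⁻ x, μ₁ ((fun s => (s, x)) ⁻¹' T) ∂ν :=
    Measure.prod_apply_symm hT
  have hslice : ∀ x : E, μ₁ ((fun s => (s, x)) ⁻¹' T) = ENNReal.ofReal (|f x - g x|) := by
    intro x
    have hpre : (fun s => (s, x)) ⁻¹' T
        = {s : ℝ | (s < f x ∧ ¬ s < g x) ∨ (s < g x ∧ ¬ s < f x)} := rfl
    rw [hpre, Measure.restrict_apply' measurableSet_Ioi]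
    exact slice_vol (f x) (g x) (hf0 x) (hg0 x)
  have hint : ∫⁻ x, ENNReal.ofReal (|f x - g x|) ∂ν = 0 := by
    rw [← lintegral_congr fun x => hslice x, ← hswap, hzero]
  have := (lintegral_eq_zero_iff'
    (((hfm.sub hgm).abs).ennreal_ofReal.aemeasurable)).1 hint
  filter_upwards [this] with x hx
  have : |f x - g x| ≤ 0 := by
    by_contra hc
    push_neg at hc
    simp only [Pi.zero_apply, Pi.sub_apply, ENNReal.ofReal_eq_zero, not_le] at hx
    linarith
  have := abs_nonneg (f x - g x)
  have : |f x - g x| = 0 := le_antisymm ‹_› ‹_›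
  have := abs_eq_zero.1 this
  linarith [sub_eq_zero.1 this, le_refl (f x)]

end RearrangementAux
def IsSymmDecrRearrangement (N : ℕ)
    (f fs : EuclideanSpace ℝ (Fin N) → ℝ) : Prop :=
  (∀ x, 0 ≤ fs x) ∧
    (∀ x y : EuclideanSpace ℝ (Fin N), ‖x‖ ≤ ‖y‖ → fs y ≤ fs x) ∧
    (∀ x y : EuclideanSpace ℝ (Fin N), ‖x‖ = ‖y‖ → fs x = fs y) ∧
    ∀ t : ℝ, 0 < t →
      volume {x | t < f x} = volume {x | t < fs x}

set_option maxHeartbeats 1000000 in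
/-- The trap energy decreases under symmetric decreasing rearrangement,
strictly unless `f` is already (a.e.) its own rearrangement. -/
theorem rearrangement_trap_energy (N : ℕ)
    (f fs : EuclideanSpace ℝ (Fin N) → ℝ)
    (hf0 : ∀ x, 0 ≤ f x) (hfm : Measurable f)
    (hfs : IsSymmDecrRearrangement N f fs)
    (hf2 : Integrable (fun x => (f x) ^ 2) volume)
    (hfx : Integrable (fun x => ‖x‖ ^ 2 * (f x) ^ 2) volume) :
    Integrable (fun x => ‖x‖ ^ 2 * (fs x) ^ 2) volume ∧
      (∫ x, ‖x‖ ^ 2 * (fs x) ^ 2) ≤ (∫ x, ‖x‖ ^ 2 * (f x) ^ 2) ∧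
      (¬ f =ᵐ[volume] fs →
        (∫ x, ‖x‖ ^ 2 * (fs x) ^ 2) < ∫ x, ‖x‖ ^ 2 * (f x) ^ 2) := by
  obtain ⟨hfs0, hfsdec, hfsrad, hfseq⟩ := hfs
  rcases Nat.eq_zero_or_pos N with hN | hN
  · -- dimension 0 : the space is a single point and `f = fs`
    subst hN
    have hall : ∀ x y : EuclideanSpace ℝ (Fin 0), x = y := fun a b => by ext i; exact Fin.elim0 i
    have feq : f = fs := by
      funext x
      by_contra hne
      rcases lt_or_gt_of_ne hne with h | h
      · set t := (f x + fs x) / 2 with htdef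
        have ht0 : 0 < t := by have := hf0 x; simp only [htdef]; linarith
        have hvol := hfseq t ht0
        have h1 : {y | t < f y} = (∅ : Set (EuclideanSpace ℝ (Fin 0))) := by
          ext y; simp only [mem_setOf_eq, mem_empty_iff_false, iff_false, not_lt]
          rw [hall y x]; simp only [htdef]; linarith
        have h2 : {y | t < fs y} = (univ : Set (EuclideanSpace ℝ (Fin 0))) := by
          ext y; simp only [mem_setOf_eq, mem_univ, iff_true]
          rw [hall y x]; simp only [htdef]; linarith
        rw [h1, h2] at hvol
        exact (isOpen_univ.measure_ne_zero volume univ_nonempty) (by simpa using hvol.symm)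
      · set t := (f x + fs x) / 2 with htdef
        have ht0 : 0 < t := by have := hfs0 x; simp only [htdef]; linarith
        have hvol := hfseq t ht0
        have h1 : {y | t < fs y} = (∅ : Set (EuclideanSpace ℝ (Fin 0))) := by
          ext y; simp only [mem_setOf_eq, mem_empty_iff_false, iff_false, not_lt]
          rw [hall y x]; simp only [htdef]; linarith
        have h2 : {y | t < f y} = (univ : Set (EuclideanSpace ℝ (Fin 0))) := by
          ext y; simp only [mem_setOf_eq, mem_univ, iff_true]
          rw [hall y x]; simp only [htdef]; linarith
        rw [h1, h2] at hvol
        exact (isOpen_univ.measure_ne_zero volume univ_nonempty) (by simpa using hvol)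
    refine ⟨by rw [← feq]; exact hfx, by rw [← feq], fun hne => absurd (by rw [feq]) hne⟩
  · -- dimension ≥ 1
    haveI : Nontrivial (EuclideanSpace ℝ (Fin N)) :=
      Module.nontrivial_of_finrank_pos (R := ℝ) (by rw [finrank_euclideanSpace_fin]; exact hN)
    set w : EuclideanSpace ℝ (Fin N) → ℝ≥0∞ := fun x => ENNReal.ofReal (‖x‖ ^ 2) with hw
    have hwm : Measurable w := (measurable_norm.pow measurable_const).ennreal_ofReal
    set μ' := volume.withDensity w with hμ'
    have hsph : ∀ r : ℝ, volume (Metric.sphere (0 : EuclideanSpace ℝ (Fin N)) r) = 0 :=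
      fun r => Measure.addHaar_sphere volume 0 r
    -- fs is measurable, with ball-shaped superlevel sets
    have hdc : ∀ t : ℝ, ∀ x y : EuclideanSpace ℝ (Fin N),
        ‖x‖ ≤ ‖y‖ → y ∈ {z | t < fs z} → x ∈ {z | t < fs z} :=
      fun t x y h hy => lt_of_lt_of_le hy (hfsdec x y h)
    have hshape := fun t : ℝ => RearrangementAux.ball_shape {z | t < fs z} (hdc t)
    have hfsm : Measurable fs := by
      apply measurable_of_Ioi
      intro t
      have : fs ⁻¹' Ioi t = {z | t < fs z} := rfl
      rw [this]
      rcases hshape t with (⟨r, -, (h | h)⟩ | h) <;> rw [h]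
      · exact measurableSet_ball
      · exact measurableSet_closedBall
      · exact MeasurableSet.univ
    -- conversion to the weighted measure
    have conv : ∀ g : EuclideanSpace ℝ (Fin N) → ℝ, Measurable g →
        ∫⁻ x, ENNReal.ofReal (‖x‖ ^ 2 * g x ^ 2) = ∫⁻ x, ENNReal.ofReal (g x ^ 2) ∂μ' := by
      intro g hgm
      rw [hμ', lintegral_withDensity_eq_lintegral_mul volume hwm
        ((hgm.pow measurable_const).ennreal_ofReal)]
      refine lintegral_congr fun x => ?_
      simp only [hw, Pi.mul_apply]
      rw [← ENNReal.ofReal_mul (by positivity)]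
    -- layer cake formula
    have layer : ∀ g : EuclideanSpace ℝ (Fin N) → ℝ, Measurable g → (∀ x, 0 ≤ g x) →
        ∫⁻ x, ENNReal.ofReal (g x ^ 2) ∂μ' =
          ENNReal.ofReal 2 * ∫⁻ t in Ioi (0:ℝ), μ' {a | t < g a} * ENNReal.ofReal t := by
      intro g hgm hg0
      have h2 : (0:ℝ) < 2 := two_pos
      have := lintegral_rpow_eq_lintegral_meas_lt_mul μ' (f := g)
        (Filter.Eventually.of_forall hg0) hgm.aemeasurable h2
      simp_rw [show (2:ℝ) - 1 = 1 by norm_num, Real.rpow_one] at this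
      simp_rw [show ∀ y : ℝ, y ^ (2:ℝ) = y ^ 2 from fun y => by
        rw [show (2:ℝ) = ((2:ℕ):ℝ) by norm_num, Real.rpow_natCast]] at this
      exact this
    -- finiteness of f-side integrals
    have hIf_fin : ∫⁻ x, ENNReal.ofReal (‖x‖ ^ 2 * f x ^ 2) ≠ ⊤ := by
      have := (hasFiniteIntegral_iff_ofReal
        (Filter.Eventually.of_forall fun x => by positivity)).1 hfx.2
      exact this.ne
    have hf2_fin : ∫⁻ x, ENNReal.ofReal (f x ^ 2) ≠ ⊤ := by
      have := (hasFiniteIntegral_iff_ofReal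
        (Filter.Eventually.of_forall fun x => by positivity)).1 hf2.2
      exact this.ne
    -- finite volume of superlevel sets of f
    have hAfin : ∀ t : ℝ, 0 < t → volume {a | t < f a} ≠ ⊤ := by
      intro t ht
      intro hcon
      have hsubset : {a | t < f a} ⊆
          {x | ENNReal.ofReal (t ^ 2) ≤ ENNReal.ofReal (f x ^ 2)} := by
        intro x hx
        simp only [mem_setOf_eq] at hx ⊢
        exact ENNReal.ofReal_le_ofReal (by nlinarith [hf0 x])
      have hcheb := mul_meas_ge_le_lintegral₀ (μ := volume)
        (f := fun x => ENNReal.ofReal (f x ^ 2))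
        ((hfm.pow measurable_const).ennreal_ofReal.aemeasurable)
        (ENNReal.ofReal (t ^ 2))
      have hbig : volume {x | ENNReal.ofReal (t ^ 2) ≤ ENNReal.ofReal (f x ^ 2)} = ⊤ :=
        top_le_iff.1 (le_trans (le_of_eq hcon.symm) (measure_mono hsubset))
      rw [hbig, ENNReal.mul_top (by simp [ENNReal.ofReal_eq_zero]; nlinarith)] at hcheb
      exact hf2_fin (top_le_iff.1 hcheb)
    -- pointwise comparison of superlevel masses
    have hcomp : ∀ t : ℝ, t ∈ Ioi (0:ℝ) →
        μ' {a | t < fs a} ≤ μ' {a | t < f a} ∧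
        (μ' {a | t < f a} ≠ ⊤ → μ' {a | t < f a} ≤ μ' {a | t < fs a} →
          volume ({a | t < f a} \ {a | t < fs a}) = 0 ∧
          volume ({a | t < fs a} \ {a | t < f a}) = 0) := by
      intro t ht
      rw [mem_Ioi] at ht
      have hAm : MeasurableSet {a | t < f a} := measurableSet_lt measurable_const hfm
      have hBm : MeasurableSet {a | t < fs a} := measurableSet_lt measurable_const hfsm
      have hvol := hfseq t ht
      rcases hshape t with (⟨r, hr, hball⟩ | huniv)
      · have hB1 : ∀ x ∈ {z | t < fs z}, ‖x‖ ≤ r := by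
          intro x hx
          rcases hball with h | h <;> rw [h] at hx
          · exact le_of_lt (by simpa [Metric.mem_ball, dist_zero_right] using hx)
          · simpa [Metric.mem_closedBall, dist_zero_right] using hx
        have hB2 : ∀ x : EuclideanSpace ℝ (Fin N), ‖x‖ < r → x ∈ {z | t < fs z} := by
          intro x hx
          rcases hball with h | h <;> rw [h]
          · simpa [Metric.mem_ball, dist_zero_right] using hx
          · simp [Metric.mem_closedBall, dist_zero_right, hx.le]
        have hBfin : volume {a | t < fs a} ≠ ⊤ := hvol ▸ hAfin t ht
        exact RearrangementAux.bathtub volume hsph w hw _ _ hAm hBm hvol hBfin r hr hB1 hB2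
      · exfalso
        apply hAfin t ht
        rw [hvol, huniv]
        exact measure_univ_of_isAddLeftInvariant volume
    -- the two weighted integrals
    set XB := ∫⁻ t in Ioi (0:ℝ), μ' {a | t < fs a} * ENNReal.ofReal t with hXB
    set XA := ∫⁻ t in Ioi (0:ℝ), μ' {a | t < f a} * ENNReal.ofReal t with hXA
    have hXle : XB ≤ XA := by
      refine lintegral_mono_ae ?_
      filter_upwards [self_mem_ae_restrict measurableSet_Ioi] with t ht
      exact mul_le_mul_left (hcomp t ht).1 _
    have hfseval : ∫⁻ x, ENNReal.ofReal (‖x‖ ^ 2 * fs x ^ 2) = ENNReal.ofReal 2 * XB := by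
      rw [conv fs hfsm, layer fs hfsm hfs0]
    have hfeval : ∫⁻ x, ENNReal.ofReal (‖x‖ ^ 2 * f x ^ 2) = ENNReal.ofReal 2 * XA := by
      rw [conv f hfm, layer f hfm hf0]
    have hIfs_le : ∫⁻ x, ENNReal.ofReal (‖x‖ ^ 2 * fs x ^ 2)
        ≤ ∫⁻ x, ENNReal.ofReal (‖x‖ ^ 2 * f x ^ 2) := by
      rw [hfseval, hfeval]
      exact mul_le_mul_right hXle _
    have hIfs_fin : ∫⁻ x, ENNReal.ofReal (‖x‖ ^ 2 * fs x ^ 2) ≠ ⊤ :=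
      fun h => hIf_fin (top_le_iff.1 (h ▸ hIfs_le))
    -- integrability of the rearranged trap energy
    have hmeas : Measurable fun x : EuclideanSpace ℝ (Fin N) => ‖x‖ ^ 2 * fs x ^ 2 :=
      (measurable_norm.pow measurable_const).mul (hfsm.pow measurable_const)
    have hint : Integrable (fun x => ‖x‖ ^ 2 * (fs x) ^ 2) volume := by
      refine ⟨hmeas.aestronglyMeasurable, ?_⟩
      rw [hasFiniteIntegral_iff_ofReal (Filter.Eventually.of_forall fun x => by positivity)]
      exact lt_top_iff_ne_top.2 hIfs_fin
    -- Bochner integrals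
    have hBfs : (∫ x, ‖x‖ ^ 2 * (fs x) ^ 2) =
        (∫⁻ x, ENNReal.ofReal (‖x‖ ^ 2 * fs x ^ 2)).toReal :=
      integral_eq_lintegral_of_nonneg_ae (Filter.Eventually.of_forall fun x => by positivity)
        hmeas.aestronglyMeasurable
    have hBf : (∫ x, ‖x‖ ^ 2 * (f x) ^ 2) =
        (∫⁻ x, ENNReal.ofReal (‖x‖ ^ 2 * f x ^ 2)).toReal :=
      integral_eq_lintegral_of_nonneg_ae (Filter.Eventually.of_forall fun x => by positivity)
        hfx.1
    have hle : (∫ x, ‖x‖ ^ 2 * (fs x) ^ 2) ≤ ∫ x, ‖x‖ ^ 2 * (f x) ^ 2 := by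
      rw [hBfs, hBf]
      exact ENNReal.toReal_mono hIf_fin hIfs_le
    refine ⟨hint, hle, ?_⟩
    intro hne
    rcases lt_or_eq_of_le hle with h | h
    · exact h
    · -- equality of energies forces f =ᵐ fs, contradiction
      exfalso
      apply hne
      have hENN : ∫⁻ x, ENNReal.ofReal (‖x‖ ^ 2 * fs x ^ 2)
          = ∫⁻ x, ENNReal.ofReal (‖x‖ ^ 2 * f x ^ 2) := by
        rw [hBfs, hBf] at h
        exact (ENNReal.toReal_eq_toReal_iff' hIfs_fin hIf_fin).1 h
      have h2ne0 : (ENNReal.ofReal 2) ≠ 0 := by simp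
      have h2netop : (ENNReal.ofReal 2) ≠ ⊤ := ENNReal.ofReal_ne_top
      have hXeq : XB = XA := by
        have := hENN
        rw [hfseval, hfeval] at this
        exact (ENNReal.mul_right_inj h2ne0 h2netop).1 this
      have hXAfin : XA ≠ ⊤ := by
        intro hcon
        rw [hcon, ENNReal.mul_top h2ne0] at hfeval
        exact hIf_fin hfeval
      have hgA_meas : Measurable fun t : ℝ => μ' {a | t < f a} * ENNReal.ofReal t := by
        have hanti : Antitone fun t : ℝ => μ' {a | t < f a} :=
          fun s t hst => measure_mono fun a ha => lt_of_le_of_lt hst ha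
        exact hanti.measurable.mul measurable_id.ennreal_ofReal
      have hgB_meas : Measurable fun t : ℝ => μ' {a | t < fs a} * ENNReal.ofReal t := by
        have hanti : Antitone fun t : ℝ => μ' {a | t < fs a} :=
          fun s t hst => measure_mono fun a ha => lt_of_le_of_lt hst ha
        exact hanti.measurable.mul measurable_id.ennreal_ofReal
      have haet : (fun t : ℝ => μ' {a | t < fs a} * ENNReal.ofReal t)
          =ᵐ[volume.restrict (Ioi (0:ℝ))]
          (fun t : ℝ => μ' {a | t < f a} * ENNReal.ofReal t) := by
        refine ae_eq_of_ae_le_of_lintegral_le ?_ ?_ hgA_meas.aemeasurable ?_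
        · filter_upwards [self_mem_ae_restrict measurableSet_Ioi] with t ht
          exact mul_le_mul_left (hcomp t ht).1 _
        · rw [← hXB]; rw [hXeq]; exact hXAfin
        · rw [← hXA, ← hXB, hXeq]
      have haefin : ∀ᵐ t ∂(volume.restrict (Ioi (0:ℝ))),
          μ' {a | t < f a} * ENNReal.ofReal t < ⊤ :=
        ae_lt_top hgA_meas (by rw [← hXA]; exact hXAfin)
      have hsymm : ∀ᵐ t ∂(volume.restrict (Ioi (0:ℝ))),
          volume ({a | t < f a} \ {a | t < fs a}) = 0 ∧
          volume ({a | t < fs a} \ {a | t < f a}) = 0 := by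
        filter_upwards [haet, haefin, self_mem_ae_restrict measurableSet_Ioi] with t hteq htfin ht
        have ht0 : (0:ℝ) < t := ht
        have htne0 : ENNReal.ofReal t ≠ 0 := by simp [ENNReal.ofReal_eq_zero]; linarith
        have htnetop : ENNReal.ofReal t ≠ ⊤ := ENNReal.ofReal_ne_top
        have hμeq : μ' {a | t < fs a} = μ' {a | t < f a} :=
          (ENNReal.mul_left_inj htne0 htnetop).1 hteq
        have hμAfin : μ' {a | t < f a} ≠ ⊤ := by
          intro hcon
          rw [hcon, ENNReal.top_mul htne0] at htfin
          exact absurd htfin (lt_irrefl _)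
        exact (hcomp t ht).2 hμAfin hμeq.ge
      exact RearrangementAux.ae_eq_of_superlevel volume f fs hf0 hfs0 hfm hfsm hsymm
end
end

section
/- For a complex-valued function z = u + iv with u, v ∈ H¹(ℝᴺ) real-valued, the modulus ρ = |z| = (u²+v²)^{1/2} belongs to H¹(ℝᴺ), and ‖∇z‖₂² - ‖∇ρ‖₂² = ∫_{{u²+v²>0}} Σ_j (u ∂_j v - v ∂_j u)² / (u²+v²) dx ≥ 0. -/
open MeasureTheory Filter Topology

noncomputable section

lemma clm_norm_sq_eq_sum {N : ℕ} (ℓ : EuclideanSpace ℝ (Fin N) →L[ℝ] ℝ) :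
    ‖ℓ‖ ^ 2 = ∑ j : Fin N, (ℓ (EuclideanSpace.single j 1)) ^ 2 := by
  set w := (InnerProductSpace.toDual ℝ (EuclideanSpace ℝ (Fin N))).symm ℓ with hw
  have hval : ∀ x, ℓ x = inner ℝ w x := fun x =>
    (InnerProductSpace.toDual_symm_apply (𝕜 := ℝ)).symm
  have hnorm : ‖ℓ‖ = ‖w‖ := by
    rw [hw, LinearIsometryEquiv.norm_map]
  rw [hnorm]
  have : ∀ j, ℓ (EuclideanSpace.single j 1) = w j := by
    intro j
    rw [hval, EuclideanSpace.inner_single_right]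
    simp
  simp_rw [this]
  rw [EuclideanSpace.norm_eq, Real.sq_sqrt (by positivity)]
  simp [sq_abs]

lemma countable_bad_set (g D : ℝ → ℝ) (hg : ∀ t, HasDerivAt g (D t) t) :
    {t : ℝ | g t = 0 ∧ D t ≠ 0}.Countable := by
  set T := {t : ℝ | g t = 0 ∧ D t ≠ 0} with hT
  have hiso : ∀ t ∈ T, 𝓝[T \ {t}] t = ⊥ := by
    intro t ht
    obtain ⟨hg0, hD⟩ := ht
    have hDpos : (0:ℝ) < |D t| := abs_pos.mpr hD
    have hlo := (hg t).isLittleO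
    have h2 := hlo.def (c := |D t| / 2) (by positivity)
    have key : ∀ᶠ s in 𝓝 t, s ∉ T \ {t} := by
      filter_upwards [h2] with s hs
      rintro ⟨⟨hgs, _⟩, hst⟩
      simp only [Set.mem_singleton_iff] at hst
      rw [hgs, hg0] at hs
      simp only [zero_sub, norm_neg, Real.norm_eq_abs, smul_eq_mul,
        ContinuousLinearMap.smulRight_apply, ContinuousLinearMap.one_apply] at hs
      have hst' : (0:ℝ) < |s - t| := by
        rw [abs_pos]; intro h; exact hst (by linarith [sub_eq_zero.mp h])
      have h3 : |s - t| * |D t| ≤ |D t| / 2 * |s - t| := by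
        calc |s - t| * |D t| = |-0 - (s - t) * D t| := by rw [neg_zero, zero_sub, abs_neg, abs_mul]
        _ ≤ |D t| / 2 * |s - t| := hs
      nlinarith
    rw [← Filter.empty_mem_iff_bot, mem_nhdsWithin]
    obtain ⟨U, hU, hUo, hUm⟩ := eventually_nhds_iff.mp key
    exact ⟨U, hUo, hUm, fun s hs => (hU s hs.1 hs.2).elim⟩
  have : DiscreteTopology T := by
    rw [discreteTopology_subtype_iff]
    intro x hx
    rw [← nhdsWithin_inter']
    rw [show {x}ᶜ ∩ T = T \ {x} by rw [Set.inter_comm, Set.diff_eq]]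
    exact hiso x hx
  rw [← Set.countable_coe_iff]
  exact TopologicalSpace.separableSpace_iff_countable.mp inferInstance
lemma ae_fderiv_zero_on_zero_set {n : ℕ} (f : EuclideanSpace ℝ (Fin (n+1)) → ℝ)
    (hf : Differentiable ℝ f) (j : Fin (n+1)) :
    ∀ᵐ x, ¬ (f x = 0 ∧ fderiv ℝ f x (EuclideanSpace.single j 1) ≠ 0) := by
  set B : Set (EuclideanSpace ℝ (Fin (n+1))) :=
    {x | f x = 0 ∧ fderiv ℝ f x (EuclideanSpace.single j 1) ≠ 0} with hB
  have hBmeas : MeasurableSet B := by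
    apply MeasurableSet.inter
    · exact (isClosed_eq hf.continuous continuous_const).measurableSet
    · exact (measurable_fderiv_apply_const ℝ f _ (measurableSet_singleton 0).compl)
  suffices h : volume B = 0 by
    rw [ae_iff]
    convert h using 2
    simp [hB]
  -- transfer to `Fin (n+1) → ℝ` and split off coordinate `j`
  set e1 := (MeasurableEquiv.toLp 2 (Fin (n+1) → ℝ)).symm with he1
  set e2 := MeasurableEquiv.piFinSuccAbove (fun _ : Fin (n+1) => ℝ) j with he2
  have hmp1 : MeasurePreserving e1 volume volume :=
    EuclideanSpace.volume_preserving_symm_measurableEquiv_toLp (Fin (n+1))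
  have hmp2 : MeasurePreserving e2 volume volume :=
    volume_preserving_piFinSuccAbove (fun _ : Fin (n+1) => ℝ) j
  set e := e1.trans e2 with he
  have hmp : MeasurePreserving e volume volume := hmp2.comp hmp1
  have hkey : volume (e.symm ⁻¹' B) = volume B :=
    (hmp.symm e).measure_preimage hBmeas.nullMeasurableSet
  rw [← hkey]
  set B2 : Set (ℝ × (Fin n → ℝ)) := e.symm ⁻¹' B with hB2
  have hB2meas : MeasurableSet B2 := e.symm.measurable hBmeas
  have hswap : MeasurePreserving (Prod.swap : (Fin n → ℝ) × ℝ → ℝ × (Fin n → ℝ))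
      (volume.prod volume) (volume.prod volume) := Measure.measurePreserving_swap
  have hv : (volume : Measure (ℝ × (Fin n → ℝ))) = volume.prod volume := rfl
  rw [show volume B2 = (volume.prod volume) B2 from by rw [← hv],
    ← hswap.measure_preimage hB2meas.nullMeasurableSet,
    Measure.measure_prod_null (measurable_swap hB2meas)]
  refine Filter.Eventually.of_forall (fun y => ?_)
  -- the slice in direction j over base point y
  set w : EuclideanSpace ℝ (Fin (n+1)) := EuclideanSpace.single j 1 with hw
  set L : ℝ → EuclideanSpace ℝ (Fin (n+1)) := fun t => e.symm (t, y) with hLdef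
  have hLt : ∀ t, L t = L 0 + t • w := by
    intro t
    ext i
    show (j.insertNth t y : ∀ _ : Fin (n+1), ℝ) i
      = (j.insertNth 0 y : ∀ _ : Fin (n+1), ℝ) i + t * (EuclideanSpace.single j (1:ℝ)) i
    by_cases hi : i = j
    · subst hi
      simp [Fin.insertNth_apply_same, EuclideanSpace.single_apply]
    · obtain ⟨k, rfl⟩ := Fin.exists_succAbove_eq hi
      simp [Fin.insertNth_apply_succAbove, EuclideanSpace.single_apply,
        (Fin.succAbove_ne j k)]
  have hLd : ∀ t, HasDerivAt L w t := by
    intro t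
    have h1 : HasDerivAt (fun s : ℝ => L 0 + s • w) w t := by
      simpa using ((hasDerivAt_id t).smul_const w).const_add (L 0)
    exact h1.congr_of_eventuallyEq (Filter.Eventually.of_forall hLt)
  have hgd : ∀ t, HasDerivAt (fun s => f (L s)) (fderiv ℝ f (L t) w) t := fun t =>
    (hf (L t)).hasFDerivAt.comp_hasDerivAt t (hLd t)
  have hcount : {t : ℝ | f (L t) = 0 ∧ fderiv ℝ f (L t) w ≠ 0}.Countable :=
    countable_bad_set _ _ hgd
  show volume (Prod.mk y ⁻¹' (Prod.swap ⁻¹' B2)) = (0 : (Fin n → ℝ) → ENNReal) y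
  have : (Prod.mk y ⁻¹' (Prod.swap ⁻¹' B2)) = {t : ℝ | f (L t) = 0 ∧ fderiv ℝ f (L t) w ≠ 0} := rfl
  rw [this, Pi.zero_apply]
  exact hcount.measure_zero _
section PW
variable {N : ℕ} {u v : EuclideanSpace ℝ (Fin N) → ℝ}

lemma rho_hasFDerivAt (hu : Differentiable ℝ u) (hv : Differentiable ℝ v)
    {x : EuclideanSpace ℝ (Fin N)} (hx : 0 < (u x) ^ 2 + (v x) ^ 2) :
    HasFDerivAt (fun y => Real.sqrt ((u y) ^ 2 + (v y) ^ 2))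
      ((Real.sqrt ((u x) ^ 2 + (v x) ^ 2))⁻¹ •
        (u x • fderiv ℝ u x + v x • fderiv ℝ v x)) x := by
  have hq : HasFDerivAt (fun y => (u y) ^ 2 + (v y) ^ 2)
      ((u x • fderiv ℝ u x + u x • fderiv ℝ u x) +
        (v x • fderiv ℝ v x + v x • fderiv ℝ v x)) x := by
    have h1 := ((hu x).hasFDerivAt.mul (hu x).hasFDerivAt)
    have h2 := ((hv x).hasFDerivAt.mul (hv x).hasFDerivAt)
    simp only [pow_two]
    exact h1.add h2
  have h := hq.sqrt (ne_of_gt hx)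
  have hs : (0:ℝ) < Real.sqrt ((u x) ^ 2 + (v x) ^ 2) := Real.sqrt_pos.mpr hx
  refine h.congr_fderiv ?_
  refine ContinuousLinearMap.ext fun z => ?_
  simp only [ContinuousLinearMap.smul_apply, ContinuousLinearMap.add_apply, smul_eq_mul]
  field_simp
  ring
end PW

section PW2
variable {N : ℕ} {u v : EuclideanSpace ℝ (Fin N) → ℝ}

lemma rho_fderiv_zero {x : EuclideanSpace ℝ (Fin N)} (hx : (u x) ^ 2 + (v x) ^ 2 = 0) :
    fderiv ℝ (fun y => Real.sqrt ((u y) ^ 2 + (v y) ^ 2)) x = 0 := by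
  refine IsLocalMin.fderiv_eq_zero ?_
  refine Filter.Eventually.of_forall fun y => ?_
  simp only [hx, Real.sqrt_zero]
  exact Real.sqrt_nonneg _
end PW2

section PW3
variable {N : ℕ} {u v : EuclideanSpace ℝ (Fin N) → ℝ}

lemma rho_grad_sq_le (hu : Differentiable ℝ u) (hv : Differentiable ℝ v)
    (x : EuclideanSpace ℝ (Fin N)) :
    ‖fderiv ℝ (fun y => Real.sqrt ((u y) ^ 2 + (v y) ^ 2)) x‖ ^ 2 ≤
      ‖fderiv ℝ u x‖ ^ 2 + ‖fderiv ℝ v x‖ ^ 2 := by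
  rcases eq_or_lt_of_le (by positivity : (0:ℝ) ≤ (u x) ^ 2 + (v x) ^ 2) with hq | hq
  · rw [rho_fderiv_zero hq.symm]
    simp
    positivity
  · rw [(rho_hasFDerivAt hu hv hq).fderiv]
    have hs : (0:ℝ) < Real.sqrt ((u x) ^ 2 + (v x) ^ 2) := Real.sqrt_pos.mpr hq
    have hsq : Real.sqrt ((u x) ^ 2 + (v x) ^ 2) ^ 2 = (u x) ^ 2 + (v x) ^ 2 :=
      Real.sq_sqrt hq.le
    rw [norm_smul]
    have hn : ‖u x • fderiv ℝ u x + v x • fderiv ℝ v x‖ ≤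
        |u x| * ‖fderiv ℝ u x‖ + |v x| * ‖fderiv ℝ v x‖ := by
      refine (norm_add_le _ _).trans ?_
      rw [norm_smul, norm_smul]
      simp [Real.norm_eq_abs]
    have h2 : (|u x| * ‖fderiv ℝ u x‖ + |v x| * ‖fderiv ℝ v x‖) ^ 2 ≤
        ((u x) ^ 2 + (v x) ^ 2) * (‖fderiv ℝ u x‖ ^ 2 + ‖fderiv ℝ v x‖ ^ 2) := by
      nlinarith [sq_abs (u x), sq_abs (v x), abs_nonneg (u x), abs_nonneg (v x),
        norm_nonneg (fderiv ℝ u x), norm_nonneg (fderiv ℝ v x),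
        sq_nonneg (|u x| * ‖fderiv ℝ v x‖ - |v x| * ‖fderiv ℝ u x‖)]
    have hn2 : ‖u x • fderiv ℝ u x + v x • fderiv ℝ v x‖ ^ 2 ≤
        ((u x) ^ 2 + (v x) ^ 2) * (‖fderiv ℝ u x‖ ^ 2 + ‖fderiv ℝ v x‖ ^ 2) := by
      nlinarith [norm_nonneg (u x • fderiv ℝ u x + v x • fderiv ℝ v x),
        abs_nonneg (u x), abs_nonneg (v x), norm_nonneg (fderiv ℝ u x),
        norm_nonneg (fderiv ℝ v x)]
    have hinv : ‖(Real.sqrt ((u x) ^ 2 + (v x) ^ 2))⁻¹‖ =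
        (Real.sqrt ((u x) ^ 2 + (v x) ^ 2))⁻¹ := by
      rw [Real.norm_eq_abs, abs_of_pos (inv_pos.mpr hs)]
    rw [hinv]
    calc ((Real.sqrt ((u x) ^ 2 + (v x) ^ 2))⁻¹ *
            ‖u x • fderiv ℝ u x + v x • fderiv ℝ v x‖) ^ 2
        = ‖u x • fderiv ℝ u x + v x • fderiv ℝ v x‖ ^ 2 / ((u x) ^ 2 + (v x) ^ 2) := by
          rw [mul_pow, inv_pow, hsq]; ring
      _ ≤ _ := by
          rw [div_le_iff₀ hq]
          nlinarith
end PW3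

lemma ae_fderiv_vanish {N : ℕ} (f : EuclideanSpace ℝ (Fin N) → ℝ)
    (hf : Differentiable ℝ f) : ∀ᵐ x, f x = 0 → fderiv ℝ f x = 0 := by
  cases N with
  | zero =>
    refine Filter.Eventually.of_forall fun x _ => ?_
    refine ContinuousLinearMap.ext fun z => ?_
    rw [Subsingleton.elim z 0, map_zero, map_zero]
  | succ n =>
    have h : ∀ j : Fin (n+1), ∀ᵐ x,
        ¬ (f x = 0 ∧ fderiv ℝ f x (EuclideanSpace.single j 1) ≠ 0) :=
      fun j => ae_fderiv_zero_on_zero_set f hf j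
    rw [← ae_all_iff] at h
    filter_upwards [h] with x hx hfx
    have hj : ∀ j : Fin (n+1), fderiv ℝ f x (EuclideanSpace.single j 1) = 0 := by
      intro j
      by_contra hne
      exact hx j ⟨hfx, hne⟩
    have hnorm : ‖fderiv ℝ f x‖ ^ 2 = 0 := by
      rw [clm_norm_sq_eq_sum]
      exact Finset.sum_eq_zero fun j _ => by rw [hj j]; ring
    have : ‖fderiv ℝ f x‖ = 0 := by
      have := sq_eq_zero_iff.mp hnorm
      exact this
    exact norm_eq_zero.mp this

/-- Quantitative diamagnetic identity for the modulus `ρ = (u²+v²)^(1/2)`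
of `z = u + iv`. -/
theorem diamagnetic_identity (N : ℕ)
    (u v : EuclideanSpace ℝ (Fin N) → ℝ)
    (hu : Differentiable ℝ u) (hv : Differentiable ℝ v)
    (hu2 : Integrable (fun x => (u x) ^ 2) volume)
    (hv2 : Integrable (fun x => (v x) ^ 2) volume)
    (hgu : Integrable (fun x => ‖fderiv ℝ u x‖ ^ 2) volume)
    (hgv : Integrable (fun x => ‖fderiv ℝ v x‖ ^ 2) volume) :
    Integrable (fun x => Real.sqrt ((u x) ^ 2 + (v x) ^ 2) ^ 2) volume ∧
    Integrable
      (fun x => ‖fderiv ℝ (fun y => Real.sqrt ((u y) ^ 2 + (v y) ^ 2)) x‖ ^ 2)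
      volume ∧
    ((∫ x, ‖fderiv ℝ u x‖ ^ 2 + ‖fderiv ℝ v x‖ ^ 2) -
        ∫ x, ‖fderiv ℝ (fun y => Real.sqrt ((u y) ^ 2 + (v y) ^ 2)) x‖ ^ 2) =
      (∫ x in {x | 0 < (u x) ^ 2 + (v x) ^ 2},
        ∑ j : Fin N,
          (u x * fderiv ℝ v x (EuclideanSpace.single j 1) -
            v x * fderiv ℝ u x (EuclideanSpace.single j 1)) ^ 2 /
            ((u x) ^ 2 + (v x) ^ 2)) ∧
    0 ≤ ∫ x in {x | 0 < (u x) ^ 2 + (v x) ^ 2},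
        ∑ j : Fin N,
          (u x * fderiv ℝ v x (EuclideanSpace.single j 1) -
            v x * fderiv ℝ u x (EuclideanSpace.single j 1)) ^ 2 /
            ((u x) ^ 2 + (v x) ^ 2) := by
  set ρ : EuclideanSpace ℝ (Fin N) → ℝ := fun y => Real.sqrt ((u y) ^ 2 + (v y) ^ 2) with hρ
  set S : Set (EuclideanSpace ℝ (Fin N)) := {x | 0 < (u x) ^ 2 + (v x) ^ 2} with hS
  have hScont : Continuous fun x => (u x) ^ 2 + (v x) ^ 2 :=
    (hu.continuous.pow 2).add (hv.continuous.pow 2)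
  have hSmeas : MeasurableSet S := (isOpen_lt continuous_const hScont).measurableSet
  -- Part 1
  have part1 : Integrable (fun x => ρ x ^ 2) volume := by
    refine (hu2.add hv2).congr (Filter.Eventually.of_forall fun x => ?_)
    simp only [Pi.add_apply, hρ]
    rw [Real.sq_sqrt (by positivity)]
  -- Part 2
  have hmeasρ : AEStronglyMeasurable (fun x => ‖fderiv ℝ ρ x‖ ^ 2) volume :=
    (((measurable_fderiv ℝ ρ).norm).pow_const 2).aestronglyMeasurable
  have part2 : Integrable (fun x => ‖fderiv ℝ ρ x‖ ^ 2) volume := by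
    refine Integrable.mono' (hgu.add hgv) hmeasρ
      (Filter.Eventually.of_forall fun x => ?_)
    rw [Real.norm_eq_abs, abs_of_nonneg (by positivity)]
    exact rho_grad_sq_le hu hv x
  -- Part 4 (nonnegativity)
  have part4 : 0 ≤ ∫ x in S,
      ∑ j : Fin N,
        (u x * fderiv ℝ v x (EuclideanSpace.single j 1) -
          v x * fderiv ℝ u x (EuclideanSpace.single j 1)) ^ 2 /
          ((u x) ^ 2 + (v x) ^ 2) := by
    refine setIntegral_nonneg hSmeas fun x _ => ?_
    exact Finset.sum_nonneg fun j _ => div_nonneg (sq_nonneg _) (by positivity)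
  -- Part 3
  have hA : Integrable (fun x => ‖fderiv ℝ u x‖ ^ 2 + ‖fderiv ℝ v x‖ ^ 2) volume :=
    hgu.add hgv
  have step1 : ((∫ x, ‖fderiv ℝ u x‖ ^ 2 + ‖fderiv ℝ v x‖ ^ 2) -
      ∫ x, ‖fderiv ℝ ρ x‖ ^ 2) =
      ∫ x, (‖fderiv ℝ u x‖ ^ 2 + ‖fderiv ℝ v x‖ ^ 2 - ‖fderiv ℝ ρ x‖ ^ 2) :=
    (integral_sub hA part2).symm
  have hF : Integrable
      (fun x => ‖fderiv ℝ u x‖ ^ 2 + ‖fderiv ℝ v x‖ ^ 2 - ‖fderiv ℝ ρ x‖ ^ 2) volume :=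
    hA.sub part2
  have step2 : ∫ x, (‖fderiv ℝ u x‖ ^ 2 + ‖fderiv ℝ v x‖ ^ 2 - ‖fderiv ℝ ρ x‖ ^ 2) =
      (∫ x in S, (‖fderiv ℝ u x‖ ^ 2 + ‖fderiv ℝ v x‖ ^ 2 - ‖fderiv ℝ ρ x‖ ^ 2)) +
      ∫ x in Sᶜ, (‖fderiv ℝ u x‖ ^ 2 + ‖fderiv ℝ v x‖ ^ 2 - ‖fderiv ℝ ρ x‖ ^ 2) :=
    (integral_add_compl hSmeas hF).symm
  have step3 : (∫ x in Sᶜ,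
      (‖fderiv ℝ u x‖ ^ 2 + ‖fderiv ℝ v x‖ ^ 2 - ‖fderiv ℝ ρ x‖ ^ 2)) = 0 := by
    have hzero : ∀ᵐ x, x ∈ Sᶜ →
        (‖fderiv ℝ u x‖ ^ 2 + ‖fderiv ℝ v x‖ ^ 2 - ‖fderiv ℝ ρ x‖ ^ 2) = 0 := by
      filter_upwards [ae_fderiv_vanish u hu, ae_fderiv_vanish v hv] with x hxu hxv hxS
      have hq0 : (u x) ^ 2 + (v x) ^ 2 = 0 := by
        have : ¬ (0 < (u x) ^ 2 + (v x) ^ 2) := hxS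
        nlinarith [sq_nonneg (u x), sq_nonneg (v x)]
      have hu0 : u x = 0 := by nlinarith [sq_nonneg (u x), sq_nonneg (v x)]
      have hv0 : v x = 0 := by nlinarith [sq_nonneg (u x), sq_nonneg (v x)]
      rw [hxu hu0, hxv hv0, rho_fderiv_zero hq0]
      simp
    calc (∫ x in Sᶜ, (‖fderiv ℝ u x‖ ^ 2 + ‖fderiv ℝ v x‖ ^ 2 - ‖fderiv ℝ ρ x‖ ^ 2))
        = ∫ _x in Sᶜ, (0:ℝ) := by
          refine setIntegral_congr_ae hSmeas.compl ?_
          exact hzero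
      _ = 0 := integral_zero _ _
  have step4 : (∫ x in S,
      (‖fderiv ℝ u x‖ ^ 2 + ‖fderiv ℝ v x‖ ^ 2 - ‖fderiv ℝ ρ x‖ ^ 2)) =
      ∫ x in S, ∑ j : Fin N,
        (u x * fderiv ℝ v x (EuclideanSpace.single j 1) -
          v x * fderiv ℝ u x (EuclideanSpace.single j 1)) ^ 2 /
          ((u x) ^ 2 + (v x) ^ 2) := by
    refine setIntegral_congr_fun hSmeas fun x hx => ?_
    have hq : 0 < (u x) ^ 2 + (v x) ^ 2 := hx
    have hs : (0:ℝ) < Real.sqrt ((u x) ^ 2 + (v x) ^ 2) := Real.sqrt_pos.mpr hq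
    have hsq : Real.sqrt ((u x) ^ 2 + (v x) ^ 2) ^ 2 = (u x) ^ 2 + (v x) ^ 2 :=
      Real.sq_sqrt hq.le
    have hd := (rho_hasFDerivAt hu hv hq).fderiv
    rw [hd, clm_norm_sq_eq_sum (fderiv ℝ u x), clm_norm_sq_eq_sum (fderiv ℝ v x),
      clm_norm_sq_eq_sum]
    rw [← Finset.sum_add_distrib, ← Finset.sum_sub_distrib]
    refine Finset.sum_congr rfl fun j _ => ?_
    simp only [ContinuousLinearMap.smul_apply, ContinuousLinearMap.add_apply,
      smul_eq_mul]
    set a := fderiv ℝ u x (EuclideanSpace.single j 1)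
    set b := fderiv ℝ v x (EuclideanSpace.single j 1)
    have h1 : ((Real.sqrt ((u x) ^ 2 + (v x) ^ 2))⁻¹ * (u x * a + v x * b)) ^ 2
        = (u x * a + v x * b) ^ 2 / ((u x) ^ 2 + (v x) ^ 2) := by
      rw [mul_pow, inv_pow, hsq]; ring
    rw [h1]
    field_simp
    ring
  refine ⟨part1, part2, ?_, part4⟩
  rw [step1, step2, step3, step4, add_zero]
end
end
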